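/- Let δ, J be real numbers with δ > 2·|J|, and define, for s₁, s₂, s₃, s₄, s₅ ∈ {−1,+1}, H(s₁,s₂,s₃,s₄,s₅) = (δ/2)·(4 + s₂s₃ + (s₂ + s₃)s₄ + 2(1 − s₂ − s₃ − s₄)s₅ − s₂ − s₃ − s₄) + J·s₁·s₄. Then for all s₁, s₂, s₃ ∈ {−1,+1}: min over s₄, s₅ ∈ {−1,+1} of H(s₁,s₂,s₃,s₄,s₅) = J·s₁·s₂·s₃, and the minimum is attained with s₄ = s₂·s₃. -/
import Mathlib

set_option linter.unusedTactic false


/-- The paper's 3-local gadget Hamiltonian with two mediator spins (Equation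
(10)): the 2-local penalty plus the coupling `J·s₁·s₄`. -/
noncomputable def Hgadget (δ J s₁ s₂ s₃ s₄ s₅ : ℝ) : ℝ :=
  (δ / 2) * (4 + s₂ * s₃ + (s₂ + s₃) * s₄ + 2 * (1 - s₂ - s₃ - s₄) * s₅
    - s₂ - s₃ - s₄) + J * s₁ * s₄

/-- For `δ > 2|J|` and spins `s₁,s₂,s₃ ∈ {−1,+1}`, minimizing the 2-local gadget
over the mediator spins `s₄, s₅ ∈ {−1,+1}` reproduces the 3-body coupling
`J·s₁·s₂·s₃` exactly, the minimum being attained with `s₄ = s₂·s₃`. -/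
theorem three_local_spin_gadget
    (δ J : ℝ) (hδ : 2 * |J| < δ)
    (s₁ s₂ s₃ : ℝ) (h₁ : s₁ = -1 ∨ s₁ = 1) (h₂ : s₂ = -1 ∨ s₂ = 1)
    (h₃ : s₃ = -1 ∨ s₃ = 1) :
    IsLeast {r : ℝ | ∃ s₄ s₅ : ℝ, (s₄ = -1 ∨ s₄ = 1) ∧ (s₅ = -1 ∨ s₅ = 1) ∧
        Hgadget δ J s₁ s₂ s₃ s₄ s₅ = r}
      (J * s₁ * s₂ * s₃) ∧
    ∃ s₅ : ℝ, (s₅ = -1 ∨ s₅ = 1) ∧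
      Hgadget δ J s₁ s₂ s₃ (s₂ * s₃) s₅ = J * s₁ * s₂ * s₃ := by
  have hJ1 : J ≤ |J| := le_abs_self J
  have hJ2 : -J ≤ |J| := neg_le_abs J
  rcases h₁ with rfl | rfl <;> rcases h₂ with rfl | rfl <;> rcases h₃ with rfl | rfl <;>
    refine ⟨⟨?_, ?_⟩, ?_⟩ <;>
    simp only [Hgadget, Set.mem_setOf_eq, mem_lowerBounds]
  all_goals first
    | (rintro r ⟨s₄, s₅, (rfl | rfl), (rfl | rfl), rfl⟩ <;> nlinarith)
    | (refine ⟨1, 1, Or.inr rfl, Or.inr rfl, ?_⟩; norm_num; done)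
    | (refine ⟨1, -1, Or.inr rfl, Or.inl rfl, ?_⟩; norm_num; done)
    | (refine ⟨-1, 1, Or.inl rfl, Or.inr rfl, ?_⟩; norm_num; done)
    | (refine ⟨-1, -1, Or.inl rfl, Or.inl rfl, ?_⟩; norm_num; done)
    | (refine ⟨1, Or.inr rfl, ?_⟩; norm_num; done)
    | (refine ⟨-1, Or.inl rfl, ?_⟩; norm_num; done)
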